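/- arXiv:math/0412192 — 2 statements merged into one kernel-verified Lean document; each statement's English description precedes it below -/
import Mathlib

section
/- In the Hecke algebra H_n(q), the shifted generators σ_i(x) := σ_i + (q^{-x}/[x]_q)·1 satisfy the Yang–Baxter equation with spectral parameters: σ_i(x)·σ_{i+1}(x+y)·σ_i(y) = σ_{i+1}(y)·σ_i(x+y)·σ_{i+1}(x), for 1 ≤ i ≤ n−2 and integers x, y such that [x]_q, [y]_q, [x+y]_q are all nonzero. -/
/-- The q-number `[k]_q = (q^k - q^{-k})/(q - q⁻¹)`. -/
noncomputable def qnum (q : ℂ) (k : ℤ) : ℂ := (q ^ k - q ^ (-k)) / (q - q⁻¹)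

/-- The defining relations of the Hecke algebra of type `A_n` (with `n` generators
`σ_1, …, σ_n`, i.e. the algebra `H_{n+1}(q)`). -/
inductive HeckeRel (q : ℂ) (n : ℕ) :
    FreeAlgebra ℂ (Fin n) → FreeAlgebra ℂ (Fin n) → Prop
  | braid (i j : Fin n) (h : (i : ℕ) + 1 = j) :
      HeckeRel q n (FreeAlgebra.ι ℂ i * FreeAlgebra.ι ℂ j * FreeAlgebra.ι ℂ i)
        (FreeAlgebra.ι ℂ j * FreeAlgebra.ι ℂ i * FreeAlgebra.ι ℂ j)
  | comm (i j : Fin n) (h : (i : ℕ) + 2 ≤ j) :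
      HeckeRel q n (FreeAlgebra.ι ℂ i * FreeAlgebra.ι ℂ j)
        (FreeAlgebra.ι ℂ j * FreeAlgebra.ι ℂ i)
  | hecke (i : Fin n) :
      HeckeRel q n (FreeAlgebra.ι ℂ i * FreeAlgebra.ι ℂ i)
        (1 + (q - q⁻¹) • FreeAlgebra.ι ℂ i)

/-- The Hecke algebra `H_{n+1}(q)` of type `A_n`. -/
abbrev HeckeAlgebra (q : ℂ) (n : ℕ) := RingQuot (HeckeRel q n)

/-- The generator `σ_i` of the Hecke algebra. -/
noncomputable def heckeGen (q : ℂ) (n : ℕ) (i : Fin n) : HeckeAlgebra q n :=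
  RingQuot.mkAlgHom ℂ (HeckeRel q n) (FreeAlgebra.ι ℂ i)

/-- The shifted generator `σ_i(x) := σ_i + (q^{-x}/[x]_q)·1`. -/
noncomputable def heckeGenShift (q : ℂ) (n : ℕ) (i : Fin n) (x : ℤ) : HeckeAlgebra q n :=
  heckeGen q n i + (q ^ (-x) / qnum q x) • 1

/-!
Expanding both sides with the braid relation and `σ² = 1 + cσ`, the Yang–Baxter equation for
`(a + u)(b + w)(a + v)` reduces to the scalar identity `w (c + u + v) = u v`. For `c = q - q⁻¹`
the shift `q^{-x}/[x]_q` equals `c/(X - 1)` with `X = q^{2x}`, and since `q^{2(x+y)} = X Y` the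
identity becomes `1/(XY - 1) · (1 + 1/(X - 1) + 1/(Y - 1)) = 1/((X - 1)(Y - 1))`.
-/

theorem yangBaxter_of_braid_of_mul_self {R A : Type*} [CommRing R] [Ring A] [Algebra R A]
    {a b : A} {c : R} (hab : a * b * a = b * a * b) (ha : a * a = 1 + c • a)
    (hb : b * b = 1 + c • b) {u v w : R} (huvw : w * (c + u + v) = u * v) :
    (a + u • 1) * (b + w • 1) * (a + v • 1) = (b + v • 1) * (a + w • 1) * (b + u • 1) := by
  simp only [mul_add, add_mul, smul_mul_assoc, mul_smul_comm, mul_one, one_mul]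
  rw [ha, hb, hab]
  simp only [smul_add, smul_smul]
  match_scalars
  · ring
  · ring
  · ring
  · linear_combination huvw
  · ring
  · linear_combination -huvw

theorem qnum_eq_div {q : ℂ} (hq : q ≠ 0) (x : ℤ) :
    qnum q x = (q ^ (2 * x) - 1) / (q ^ x * (q - q⁻¹)) := by
  have := zpow_ne_zero x hq
  rw [qnum, two_mul, zpow_add₀ hq, zpow_neg]
  field_simp

theorem zpow_neg_div_qnum {q : ℂ} (hq : q ≠ 0) (x : ℤ) :
    q ^ (-x) / qnum q x = (q - q⁻¹) / (q ^ (2 * x) - 1) := by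
  rw [qnum_eq_div hq, zpow_neg, div_div_eq_mul_div, inv_mul_cancel_left₀ (zpow_ne_zero x hq)]

theorem zpow_two_mul_ne_one_of_qnum_ne_zero {q : ℂ} (hq : q ≠ 0) {x : ℤ} (hx : qnum q x ≠ 0) :
    q ^ (2 * x) ≠ 1 := by
  rw [qnum_eq_div hq] at hx
  exact sub_ne_zero.1 (div_ne_zero_iff.1 hx).1

theorem div_sub_one_yangBaxter {K : Type*} [Field K] (d : K) {X Y : K} (hX : X ≠ 1)
    (hY : Y ≠ 1) (hXY : X * Y ≠ 1) :
    d / (X * Y - 1) * (d + d / (X - 1) + d / (Y - 1)) = d / (X - 1) * (d / (Y - 1)) := by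
  have := sub_ne_zero.2 hX
  have := sub_ne_zero.2 hY
  have := sub_ne_zero.2 hXY
  field_simp
  ring

theorem heckeGen_braid {q : ℂ} {n : ℕ} {i j : Fin n} (hij : (i : ℕ) + 1 = j) :
    heckeGen q n i * heckeGen q n j * heckeGen q n i
      = heckeGen q n j * heckeGen q n i * heckeGen q n j := by
  simpa only [heckeGen, map_mul] using RingQuot.mkAlgHom_rel ℂ (HeckeRel.braid (q := q) i j hij)

theorem heckeGen_mul_self (q : ℂ) (n : ℕ) (i : Fin n) :
    heckeGen q n i * heckeGen q n i = 1 + (q - q⁻¹) • heckeGen q n i := by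
  simpa only [heckeGen, map_mul, map_add, map_one, map_smul] using
    RingQuot.mkAlgHom_rel ℂ (HeckeRel.hecke (q := q) (n := n) i)

/-- Yang–Baxter equation with spectral parameters for the shifted Hecke generators:
`σ_i(x)·σ_{i+1}(x+y)·σ_i(y) = σ_{i+1}(y)·σ_i(x+y)·σ_{i+1}(x)`. -/
theorem heckeGenShift_yangBaxter (q : ℂ) (hq : q ≠ 0) (n : ℕ) (i : Fin n)
    (h : (i : ℕ) + 1 < n) (x y : ℤ)
    (hx : qnum q x ≠ 0) (hy : qnum q y ≠ 0) (hxy : qnum q (x + y) ≠ 0) :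
    heckeGenShift q n i x * heckeGenShift q n ⟨(i : ℕ) + 1, h⟩ (x + y)
        * heckeGenShift q n i y
      = heckeGenShift q n ⟨(i : ℕ) + 1, h⟩ y * heckeGenShift q n i (x + y)
        * heckeGenShift q n ⟨(i : ℕ) + 1, h⟩ x := by
  simp only [heckeGenShift, zpow_neg_div_qnum hq]
  refine yangBaxter_of_braid_of_mul_self (heckeGen_braid rfl)
    (heckeGen_mul_self q n i) (heckeGen_mul_self q n _) ?_
  have hXY : q ^ (2 * x) * q ^ (2 * y) ≠ 1 := by
    rw [← zpow_add₀ hq, ← mul_add]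
    exact zpow_two_mul_ne_one_of_qnum_ne_zero hq hxy
  rw [mul_add 2 x y, zpow_add₀ hq]
  exact div_sub_one_yangBaxter _ (zpow_two_mul_ne_one_of_qnum_ne_zero hq hx)
    (zpow_two_mul_ne_one_of_qnum_ne_zero hq hy) hXY
end

section
/- If {R, F} is a compatible pair of R-matrices (i.e., R_1F_2F_1 = F_2F_1R_2 and R_2F_1F_2 = F_1F_2R_1 hold on V^{⊗3}), then R_f := F^{-1}R^{-1}F is again an R-matrix (satisfies the braid relation) and the pair {R_f, F} is compatible. -/
open scoped BigOperators

/-- An operator on `V ⊗ V` (`V = ℂ^N`). -/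
abbrev TwoSiteOp (N : ℕ) := Matrix (Fin N × Fin N) (Fin N × Fin N) ℂ

/-- `X₁ = X ⊗ Id` on `V^{⊗3}`. -/
def op1 {N : ℕ} (X : TwoSiteOp N) :
    Matrix (Fin N × Fin N × Fin N) (Fin N × Fin N × Fin N) ℂ :=
  Matrix.of fun a b =>
    X (a.1, a.2.1) (b.1, b.2.1) * (if a.2.2 = b.2.2 then 1 else 0)

/-- `X₂ = Id ⊗ X` on `V^{⊗3}`. -/
def op2 {N : ℕ} (X : TwoSiteOp N) :
    Matrix (Fin N × Fin N × Fin N) (Fin N × Fin N × Fin N) ℂ :=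
  Matrix.of fun a b =>
    (if a.1 = b.1 then (1 : ℂ) else 0) * X (a.2.1, a.2.2) (b.2.1, b.2.2)

/-- `X` satisfies the braid relation `X₁X₂X₁ = X₂X₁X₂` on `V^{⊗3}`. -/
def IsBraid {N : ℕ} (X : TwoSiteOp N) : Prop :=
  op1 X * op2 X * op1 X = op2 X * op1 X * op2 X

/-- `{R,F}` is a compatible pair: `R₁F₂F₁ = F₂F₁R₂` and `R₂F₁F₂ = F₁F₂R₁`. -/
def IsCompatiblePair {N : ℕ} (R F : TwoSiteOp N) : Prop :=
  op1 R * op2 F * op1 F = op2 F * op1 F * op2 R ∧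
  op2 R * op1 F * op2 F = op1 F * op2 F * op1 R

lemma op1_mul {N : ℕ} (X Y : TwoSiteOp N) : op1 (X * Y) = op1 X * op1 Y := by
  ext a b
  simp [op1, Matrix.mul_apply, Fintype.sum_prod_type, ite_mul, mul_ite, Finset.mul_sum,
    Finset.sum_mul, mul_assoc]

lemma op2_mul {N : ℕ} (X Y : TwoSiteOp N) : op2 (X * Y) = op2 X * op2 Y := by
  ext a b
  simp [op2, Matrix.mul_apply, Fintype.sum_prod_type, ite_mul, mul_ite, Finset.mul_sum,
    Finset.sum_mul, mul_assoc]

lemma op1_one {N : ℕ} : op1 (1 : TwoSiteOp N) = 1 := by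
  ext a b
  simp only [op1, Matrix.of_apply, Matrix.one_apply, Prod.ext_iff]
  by_cases h1 : a.1 = b.1 <;> by_cases h2 : a.2.1 = b.2.1 <;> by_cases h3 : a.2.2 = b.2.2 <;>
    simp_all

lemma op2_one {N : ℕ} : op2 (1 : TwoSiteOp N) = 1 := by
  ext a b
  simp only [op2, Matrix.of_apply, Matrix.one_apply, Prod.ext_iff]
  by_cases h1 : a.1 = b.1 <;> by_cases h2 : a.2.1 = b.2.1 <;> by_cases h3 : a.2.2 = b.2.2 <;>
    simp_all

lemma braidKey {G : Type*} [Group G] (r1 r2 g h : G)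
    (hr : r1*r2*r1 = r2*r1*r2) (hf : g*h*g = h*g*h)
    (C1 : r1*h*g = h*g*r2) (C2 : r2*g*h = g*h*r1) :
    (g⁻¹*r1⁻¹*g)*(h⁻¹*r2⁻¹*h)*(g⁻¹*r1⁻¹*g) = (h⁻¹*r2⁻¹*h)*(g⁻¹*r1⁻¹*g)*(h⁻¹*r2⁻¹*h) ∧
    (g⁻¹*r1⁻¹*g)*h*g = h*g*(h⁻¹*r2⁻¹*h) ∧
    (h⁻¹*r2⁻¹*h)*g*h = g*h*(g⁻¹*r1⁻¹*g) := by
  have hab : r1⁻¹*r2⁻¹*r1⁻¹ = r2⁻¹*r1⁻¹*r2⁻¹ := by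
    have := congrArg (·⁻¹) hr
    simpa [mul_assoc] using this
  have hb : r2⁻¹ = g⁻¹*h⁻¹*r1⁻¹*(h*g) := by
    have h2 : r2 = (h*g)⁻¹*r1*(h*g) := by
      rw [show (h*g)⁻¹*r1*(h*g) = (h*g)⁻¹*(r1*h*g) by group, C1]; group
    rw [h2]; group
  have hab2 : (g*h)*r1⁻¹*(g*h)⁻¹ = r2⁻¹ := by
    have h2 : r2 = (g*h)*r1*(g*h)⁻¹ := by
      rw [show (g*h)*r1*(g*h)⁻¹ = (g*h*r1)*(g*h)⁻¹ by group, ← C2]; group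
    rw [h2]; group
  have hs2 : h⁻¹*r2⁻¹*h = (g*h*g)⁻¹*r1⁻¹*(g*h*g) := by
    rw [hb]
    calc h⁻¹*(g⁻¹*h⁻¹*r1⁻¹*(h*g))*h = (h*g*h)⁻¹*r1⁻¹*(h*g*h) := by group
      _ = (g*h*g)⁻¹*r1⁻¹*(g*h*g) := by rw [← hf]
  refine ⟨?_, ?_, ?_⟩
  · rw [hs2]
    calc (g⁻¹*r1⁻¹*g)*((g*h*g)⁻¹*r1⁻¹*(g*h*g))*(g⁻¹*r1⁻¹*g)
        = (g*h*g)⁻¹*((g*h*r1⁻¹*(g*h)⁻¹)*r1⁻¹*(g*h*r1⁻¹*(g*h)⁻¹))*(g*h*g) := by group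
      _ = (g*h*g)⁻¹*(r2⁻¹*r1⁻¹*r2⁻¹)*(g*h*g) := by rw [hab2]
      _ = (g*h*g)⁻¹*(r1⁻¹*r2⁻¹*r1⁻¹)*(g*h*g) := by rw [hab]
      _ = (g*h*g)⁻¹*(r1⁻¹*(g*h*r1⁻¹*(g*h)⁻¹)*r1⁻¹)*(g*h*g) := by rw [hab2]
      _ = ((g*h*g)⁻¹*r1⁻¹*(g*h*g))*(g⁻¹*r1⁻¹*g)*((g*h*g)⁻¹*r1⁻¹*(g*h*g)) := by group
  · rw [hs2]; group
  · rw [← hab2]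
    calc (h⁻¹*(g*h*r1⁻¹*(g*h)⁻¹)*h)*g*h
        = (h⁻¹*g*h)*r1⁻¹*(h⁻¹*g⁻¹*(h*g*h)) := by group
      _ = (h⁻¹*g*h)*r1⁻¹*(h⁻¹*g⁻¹*(g*h*g)) := by rw [← hf]
      _ = (h⁻¹*(g*h*g)*g⁻¹)*r1⁻¹*g := by group
      _ = (h⁻¹*(h*g*h)*g⁻¹)*r1⁻¹*g := by rw [hf]
      _ = g*h*(g⁻¹*r1⁻¹*g) := by group

/-- If `{R,F}` is a compatible pair of (invertible) R-matrices, then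
`R_f := F⁻¹R⁻¹F` is again an R-matrix and the pair `{R_f, F}` is compatible. -/
theorem twist_is_Rmatrix_and_compatible {N : ℕ} (R Rinv F Finv : TwoSiteOp N)
    (hbR : IsBraid R) (hbF : IsBraid F)
    (hR : R * Rinv = 1) (hR' : Rinv * R = 1)
    (hF : F * Finv = 1) (hF' : Finv * F = 1)
    (hcomp : IsCompatiblePair R F) :
    IsBraid (Finv * Rinv * F) ∧ IsCompatiblePair (Finv * Rinv * F) F := by
  obtain ⟨hc1, hc2⟩ := hcomp
  set M := Matrix (Fin N × Fin N × Fin N) (Fin N × Fin N × Fin N) ℂ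
  let uR1 : Mˣ := ⟨op1 R, op1 Rinv, by rw [← op1_mul, hR, op1_one],
    by rw [← op1_mul, hR', op1_one]⟩
  let uR2 : Mˣ := ⟨op2 R, op2 Rinv, by rw [← op2_mul, hR, op2_one],
    by rw [← op2_mul, hR', op2_one]⟩
  let uF1 : Mˣ := ⟨op1 F, op1 Finv, by rw [← op1_mul, hF, op1_one],
    by rw [← op1_mul, hF', op1_one]⟩
  let uF2 : Mˣ := ⟨op2 F, op2 Finv, by rw [← op2_mul, hF, op2_one],
    by rw [← op2_mul, hF', op2_one]⟩
  have key := braidKey uR1 uR2 uF1 uF2 (Units.ext hbR) (Units.ext hbF)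
    (Units.ext hc1) (Units.ext hc2)
  refine ⟨?_, ?_, ?_⟩
  · show op1 _ * op2 _ * op1 _ = op2 _ * op1 _ * op2 _
    rw [op1_mul, op1_mul, op2_mul, op2_mul]
    exact congrArg Units.val key.1
  · show op1 _ * op2 F * op1 F = op2 F * op1 F * op2 _
    rw [op1_mul, op1_mul, op2_mul, op2_mul]
    exact congrArg Units.val key.2.1
  · show op2 _ * op1 F * op2 F = op1 F * op2 F * op1 _
    rw [op2_mul, op2_mul, op1_mul, op1_mul]
    exact congrArg Units.val key.2.2
end
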